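/- Let α > 0 be a typical number with exponent τ > 0. Define, for r ≥ 1 and β ∈ ℝ, K(α,r,β) = ⌊r⌋ + 2∑_{1 ≤ k ≤ r} ⌊αk⌋ if β ∈ ℤ, and K(α,r,β) = ∑_{1 ≤ k ≤ r} (⌊αk + 1 − β⌋ + ⌊αk + β⌋) if β ∉ ℤ. Then there exist C_α > 0 and r₀ such that for all r ≥ r₀ and all β₁, β₂ ∈ ℝ, |K(α,r,β₁) − K(α,r,β₂)| < C_α·(log r)^{1+τ}. -/

import Mathlib

open Real Set Filter

/-- `α` is typical with exponent `τ` and constant `δ`. -/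
def IsTypicalWith (α τ δ : ℝ) : Prop :=
  ∀ k₁ k₂ : ℤ, k₂ ≠ 0 →
    δ / (|(k₂ : ℝ)| * (Real.log (1 + |(k₂ : ℝ)|)) ^ τ) ≤ |(k₁ : ℝ) + α * (k₂ : ℝ)|

/-- `α` is typical: typical with some exponent `τ > 0` and constant `δ > 0`. -/
def IsTypical (α : ℝ) : Prop := ∃ τ > (0:ℝ), ∃ δ > (0:ℝ), IsTypicalWith α τ δ


open Classical in
/-- The counting function `K(α,r,β)`: the number of lattice points of
`ℤ² + (0,β)` and `ℤ² - (0,β)` in `{(x,y) : 0 < x ≤ r, 0 ≤ y ≤ αx}`, points on the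
`x`-axis counting with weight `½`. -/
noncomputable def Kfun (α r β : ℝ) : ℝ :=
  if ∃ m : ℤ, (m : ℝ) = β then
    (⌊r⌋ : ℝ) + 2 * ∑ k ∈ Finset.Icc 1 ⌊r⌋.toNat, (⌊α * (k : ℝ)⌋ : ℝ)
  else
    ∑ k ∈ Finset.Icc 1 ⌊r⌋.toNat,
      ((⌊α * (k : ℝ) + 1 - β⌋ : ℝ) + (⌊α * (k : ℝ) + β⌋ : ℝ))

namespace LatticeAux

open Finset


lemma sum_ediv (q : ℕ) (hq : 0 < q) (n : ℤ) :
    ∑ i ∈ Finset.range q, (n + (i:ℤ)) / (q:ℤ) = n := by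
  have hq' : (0:ℤ) < (q:ℤ) := by exact_mod_cast hq
  obtain ⟨a, r, hrq, rfl⟩ : ∃ (a : ℤ) (r : ℕ), r < q ∧ n = q * a + r := by
    refine ⟨n / q, (n % q).toNat, ?_, ?_⟩
    · have h1 := Int.emod_lt_of_pos n hq'
      have h0 : 0 ≤ n % q := Int.emod_nonneg n hq'.ne'
      omega
    · have := Int.mul_ediv_add_emod n q
      have h0 : 0 ≤ n % q := Int.emod_nonneg n hq'.ne'
      omega
  have step : ∀ i ∈ Finset.range q, ((q:ℤ) * a + r + (i:ℤ)) / (q:ℤ)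
      = a + if q ≤ r + i then 1 else 0 := by
    intro i hi
    have hi' : i < q := Finset.mem_range.mp hi
    have e1 : (q:ℤ) * a + r + i = ((r + i : ℕ) : ℤ) + a * q := by push_cast; ring
    rw [e1, Int.add_mul_ediv_right _ _ hq'.ne']
    have e2 : ((r + i : ℕ) : ℤ) / (q:ℤ) = (((r + i) / q : ℕ) : ℤ) :=
      (Int.natCast_div _ _).symm
    rw [e2]
    split_ifs with h
    · have : (r + i) / q = 1 := Nat.div_eq_of_lt_le (by omega) (by omega)
      rw [this]; ring
    · have : (r + i) / q = 0 := Nat.div_eq_of_lt (by omega)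
      rw [this]; ring
  rw [Finset.sum_congr rfl step, Finset.sum_add_distrib, Finset.sum_const, Finset.sum_boole]
  have h2 : (Finset.range q).filter (fun i => q ≤ r + i) = Finset.Ico (q - r) q := by
    ext i; simp only [Finset.mem_filter, Finset.mem_range, Finset.mem_Ico]; omega
  rw [h2, Nat.card_Ico, Finset.card_range]
  have h3 : q - (q - r) = r := by omega
  rw [h3]
  push_cast
  ring


lemma floor_intAdd_div (q : ℕ) (hq : 0 < q) (m : ℤ) {γ : ℝ} (h0 : 0 ≤ γ) (h1 : γ < 1) :
    ⌊((m:ℝ) + γ) / (q:ℝ)⌋ = m / q := by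
  have hq' : (0:ℝ) < (q:ℝ) := by exact_mod_cast hq
  have hqz : ((q:ℤ):ℝ) = (q:ℝ) := by push_cast; ring
  have hed := Int.mul_ediv_add_emod m q
  have hml : m % q < q := Int.emod_lt_of_pos m (by exact_mod_cast hq)
  have hm0 : 0 ≤ m % q := Int.emod_nonneg m (by exact_mod_cast hq.ne')
  have hR : ((q:ℝ)) * ((m / q : ℤ) : ℝ) + ((m % q : ℤ) : ℝ) = (m:ℝ) := by
    exact_mod_cast hed
  rw [Int.floor_eq_iff]
  constructor
  · rw [le_div_iff₀ hq']
    have : ((m % q : ℤ) : ℝ) ≥ 0 := by exact_mod_cast hm0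
    nlinarith
  · rw [div_lt_iff₀ hq']
    have h2 : ((m % q : ℤ) : ℝ) ≤ (q:ℝ) - 1 := by
      have : m % q ≤ q - 1 := by omega
      have := (@Int.cast_le ℝ _ _ _).mpr this
      push_cast at this
      linarith
    nlinarith

lemma hermite (q : ℕ) (hq : 0 < q) (c : ℝ) :
    ∑ i ∈ Finset.range q, ⌊c + (i:ℝ)/q⌋ = ⌊(q:ℝ) * c⌋ := by
  have hq' : (0:ℝ) < (q:ℝ) := by exact_mod_cast hq
  set n := ⌊(q:ℝ) * c⌋ with hn
  set γ := Int.fract ((q:ℝ) * c) with hγ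
  have hc : c = ((n:ℝ) + γ) / q := by
    rw [eq_div_iff hq'.ne']
    have := Int.floor_add_fract ((q:ℝ) * c)
    rw [← hn, ← hγ] at this
    linarith
  have step : ∀ i ∈ Finset.range q, ⌊c + (i:ℝ)/q⌋ = (n + i) / (q:ℤ) := by
    intro i hi
    have e : c + (i:ℝ)/q = (((n + i : ℤ):ℝ) + γ) / q := by
      rw [hc]; push_cast; ring
    rw [e, floor_intAdd_div q hq (n+i) (Int.fract_nonneg _) (Int.fract_lt_one _)]
  rw [Finset.sum_congr rfl step]
  exact sum_ediv q hq n



lemma ind_floor {b : ℝ} (hb0 : 0 ≤ b) (hb1 : b ≤ 1) (x : ℝ) :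
    ⌊x⌋ - ⌊x - b⌋ = if Int.fract x < b then 1 else 0 := by
  have hfr : Int.fract x = x - ⌊x⌋ := rfl
  have hfl := Int.floor_le x
  have hlt := Int.lt_floor_add_one x
  split_ifs with h
  · have : ⌊x - b⌋ = ⌊x⌋ - 1 := by
      rw [Int.floor_eq_iff]
      constructor
      · push_cast; rw [hfr] at h; linarith
      · push_cast; rw [hfr] at h; linarith
    omega
  · push_neg at h
    have : ⌊x - b⌋ = ⌊x⌋ := by
      rw [Int.floor_eq_iff]
      constructor
      · rw [hfr] at h; linarith
      · push_cast; linarith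
    omega

-- L5
lemma W_eq (q : ℕ) (hq : 0 < q) (c t : ℝ) (h0 : 0 ≤ t) (h1 : t ≤ 1) :
    ((((Finset.range q).filter (fun i : ℕ => Int.fract ((i:ℝ)/q + c) < t)).card : ℤ))
      = ⌊(q:ℝ)*c⌋ - ⌊(q:ℝ)*c - q*t⌋ := by
  have : ((((Finset.range q).filter (fun i : ℕ => Int.fract ((i:ℝ)/q + c) < t)).card : ℤ))
      = ∑ i ∈ Finset.range q, if Int.fract ((i:ℝ)/q + c) < t then (1:ℤ) else 0 := by
    rw [Finset.sum_boole]
  rw [this]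
  have step : ∀ i ∈ Finset.range q, (if Int.fract ((i:ℝ)/q + c) < t then (1:ℤ) else 0)
      = ⌊c + (i:ℝ)/q⌋ - ⌊(c - t) + (i:ℝ)/q⌋ := by
    intro i hi
    rw [← ind_floor h0 h1 ((i:ℝ)/q + c)]
    ring_nf
  rw [Finset.sum_congr rfl step, Finset.sum_sub_distrib, hermite q hq c, hermite q hq (c - t)]
  ring_nf

lemma W_close (q : ℕ) (hq : 0 < q) (c t : ℝ) (h0 : 0 ≤ t) (h1 : t ≤ 1) :
    |((((Finset.range q).filter (fun i : ℕ => Int.fract ((i:ℝ)/q + c) < t)).card : ℝ)) - q*t| ≤ 1 := by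
  have h := W_eq q hq c t h0 h1
  have hcast : ((((Finset.range q).filter (fun i : ℕ => Int.fract ((i:ℝ)/q + c) < t)).card : ℝ))
      = ((⌊(q:ℝ)*c⌋ : ℝ) - (⌊(q:ℝ)*c - q*t⌋ : ℝ)) := by exact_mod_cast h
  rw [hcast]
  have h1' := Int.floor_le ((q:ℝ)*c)
  have h2' := Int.lt_floor_add_one ((q:ℝ)*c)
  have h3' := Int.floor_le ((q:ℝ)*c - q*t)
  have h4' := Int.lt_floor_add_one ((q:ℝ)*c - q*t)
  rw [abs_le]
  constructor <;> linarith


lemma fract_mod_div (q : ℕ) (hq : 0 < q) (m : ℕ) (c : ℝ) :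
    Int.fract (((m % q : ℕ) : ℝ)/q + c) = Int.fract ((m:ℝ)/q + c) := by
  have hq' : (0:ℝ) < (q:ℝ) := by exact_mod_cast hq
  have e : (m:ℝ)/q + c = ((m % q : ℕ) : ℝ)/q + c + ((m / q : ℕ) : ℕ) := by
    have h := Nat.div_add_mod m q
    have : (m:ℝ) = (q:ℝ) * ((m / q : ℕ):ℝ) + ((m % q : ℕ):ℝ) := by exact_mod_cast h.symm
    field_simp
    linarith [mul_comm (q:ℝ) ((m / q : ℕ):ℝ)]
  rw [e, Int.fract_add_natCast]

lemma mem_unique (q : ℕ) (hq : 0 < q) {j₁ j₂ : ℕ} (h₁ : 1 ≤ j₁) (h₁' : j₁ ≤ q)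
    (h₂ : 1 ≤ j₂) (h₂' : j₂ ≤ q) (h : j₁ % q = j₂ % q) : j₁ = j₂ := by
  rcases eq_or_lt_of_le h₁' with rfl | hlt₁ <;> rcases eq_or_lt_of_le h₂' with h' | hlt₂
  · omega
  · rw [Nat.mod_self, Nat.mod_eq_of_lt hlt₂] at h; omega
  · rw [h', Nat.mod_self, Nat.mod_eq_of_lt hlt₁] at h; omega
  · rw [Nat.mod_eq_of_lt hlt₁, Nat.mod_eq_of_lt hlt₂] at h; omega

lemma reindex (p q : ℕ) (hq : 0 < q) (hcop : Nat.Coprime p q) (c : ℝ)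
    (F : ℝ → Prop) [DecidablePred F] :
    ((Finset.Icc 1 q).filter (fun j => F (Int.fract (((j * p : ℕ):ℝ)/q + c)))).card
      = ((Finset.range q).filter (fun i : ℕ => F (Int.fract ((i:ℝ)/q + c)))).card := by
  apply Finset.card_nbij (i := fun j => (j * p) % q)
  · intro j hj
    simp only [Finset.mem_coe, Finset.mem_filter, Finset.mem_Icc] at hj
    simp only [Finset.mem_coe, Finset.mem_filter, Finset.mem_range]
    refine ⟨Nat.mod_lt _ hq, ?_⟩
    rw [← fract_mod_div q hq (j*p) c] at hj
    exact_mod_cast hj.2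
  · intro j₁ hj₁ j₂ hj₂ h
    simp only [Finset.coe_filter, Set.mem_setOf_eq, Finset.mem_Icc] at hj₁ hj₂
    have hmeq : j₁ % q = j₂ % q := by
      have : j₁ * p ≡ j₂ * p [MOD q] := h
      exact Nat.ModEq.cancel_right_of_coprime (by rwa [Nat.coprime_comm] at hcop) this
    exact mem_unique q hq hj₁.1.1 hj₁.1.2 hj₂.1.1 hj₂.1.2 hmeq
  · intro i hi
    simp only [Finset.coe_filter, Set.mem_setOf_eq, Finset.mem_range] at hi
    -- find j ∈ [1,q] with (j*p) % q = i
    have hexists : ∃ j, 1 ≤ j ∧ j ≤ q ∧ (j * p) % q = i := by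
      rcases eq_or_lt_of_le (Nat.one_le_iff_ne_zero.mpr hq.ne') with hq1 | hq2
      · refine ⟨1, le_refl _, by omega, ?_⟩
        have hi0 : i = 0 := by omega
        rw [hi0, ← hq1]
        simp [Nat.mod_one]
      · obtain ⟨u, -, hu⟩ := Nat.exists_mul_mod_eq_one_of_coprime hcop hq2
        set j₀ := (i * u) % q with hj₀
        refine ⟨if j₀ = 0 then q else j₀, by split <;> omega,
          by have := Nat.mod_lt (i*u) hq; split <;> omega, ?_⟩
        have hjmod : (if j₀ = 0 then q else j₀) % q = j₀ % q := by
          by_cases h : j₀ = 0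
          · rw [if_pos h, h]; simp
          · rw [if_neg h]
        have hmodeq : (if j₀ = 0 then q else j₀) * p ≡ (i * u) * p [MOD q] := by
          apply Nat.ModEq.mul_right
          calc (if j₀ = 0 then q else j₀) ≡ j₀ [MOD q] := by
                unfold Nat.ModEq; rw [hjmod]
            _ ≡ i * u [MOD q] := Nat.mod_modEq _ _
        have h2 : (i * u) * p ≡ i [MOD q] := by
          have : (i * u) * p = i * (p * u) := by ring
          rw [this]
          calc i * (p * u) ≡ i * 1 [MOD q] := by
                apply Nat.ModEq.mul_left
                unfold Nat.ModEq
                rw [hu, Nat.mod_eq_of_lt hq2]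
            _ = i := by ring
        have := hmodeq.trans h2
        unfold Nat.ModEq at this
        rw [Nat.mod_eq_of_lt hi.1] at this
        exact this
    obtain ⟨j, hj1, hj2, hj3⟩ := hexists
    refine ⟨j, ?_, hj3⟩
    simp only [Finset.mem_coe, Finset.mem_filter, Finset.mem_Icc]
    refine ⟨⟨hj1, hj2⟩, ?_⟩
    rw [← fract_mod_div q hq (j*p) c, hj3]
    exact hi.2

open Classical in
noncomputable def cnt (α c x : ℝ) (N : ℕ) : ℕ :=
  ((Finset.Icc 1 N).filter fun k : ℕ => Int.fract (α * k + c) < x).card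

lemma fract_shift (y η : ℝ) : Int.fract (y + η) = Int.fract (Int.fract y + η) := by
  have e : y + η = (Int.fract y + η) + (⌊y⌋ : ℝ) := by rw [Int.fract]; ring
  rw [e, Int.fract_add_intCast]

lemma blk (α : ℝ) {p : ℤ} {q : ℕ} (hq : 0 < q) (hp : 0 ≤ p) (hcop : Nat.Coprime p.natAbs q)
    (hθ : (q:ℝ) * |(q:ℝ) * α - p| ≤ 1) (c x : ℝ) (h0 : 0 ≤ x) (h1 : x ≤ 1) :
    |(cnt α c x q : ℝ) - q * x| ≤ 4 := by
  classical
  have hq' : (0:ℝ) < (q:ℝ) := by exact_mod_cast hq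
  have hq1 : (1:ℝ) ≤ (q:ℝ) := by exact_mod_cast hq
  set p' := p.toNat with hp'
  have hpc : ((p' : ℕ) : ℝ) = (p : ℝ) := by
    rw [hp']; exact_mod_cast Int.toNat_of_nonneg hp
  set ε := |(q:ℝ) * α - p| with hε
  have hε0 : 0 ≤ ε := abs_nonneg _
  have hεq : (q:ℝ) * ε ≤ 1 := hθ
  have hε1 : ε ≤ 1 := by nlinarith
  set f : ℕ → ℝ := fun j => Int.fract (((j * p' : ℕ):ℝ)/q + c) with hf
  set g : ℕ → ℝ := fun i => Int.fract ((i:ℝ)/q + c) with hg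
  have hg0 : ∀ i, 0 ≤ g i := fun i => Int.fract_nonneg _
  have hg1 : ∀ i, g i < 1 := fun i => Int.fract_lt_one _
  have hf0 : ∀ j, 0 ≤ f j := fun j => Int.fract_nonneg _
  have hf1 : ∀ j, f j < 1 := fun j => Int.fract_lt_one _
  -- the target set
  set Sq := (Finset.Icc 1 q).filter (fun j : ℕ => Int.fract (α * j + c) < x) with hSq
  have hcnt : cnt α c x q = Sq.card := by
    unfold cnt
    exact congrArg Finset.card (Finset.filter_congr_decidable _ _ _)
  have hcop' : Nat.Coprime p' q := by
    have : p' = p.natAbs := by omega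
    rwa [this]
  -- per-j translation
  have hkey : ∀ j ∈ Finset.Icc 1 q, ∃ η : ℝ, |η| ≤ ε ∧
      Int.fract (α * j + c) = Int.fract (f j + η) := by
    intro j hj
    simp only [Finset.mem_Icc] at hj
    refine ⟨α * j - ((j * p' : ℕ):ℝ)/q, ?_, ?_⟩
    · have hj1 : (1:ℝ) ≤ (j:ℝ) := by exact_mod_cast hj.1
      have hjq : (j:ℝ) ≤ (q:ℝ) := by exact_mod_cast hj.2
      have e : α * j - ((j * p' : ℕ):ℝ)/q = ((j:ℝ)/q) * ((q:ℝ) * α - p) := by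
        push_cast [hpc]
        field_simp
      rw [e, abs_mul, abs_of_nonneg (show (0:ℝ) ≤ (j:ℝ)/q by positivity)]
      calc (j:ℝ)/q * |(q:ℝ)*α - p| ≤ 1 * |(q:ℝ)*α - p| := by
            apply mul_le_mul_of_nonneg_right _ (abs_nonneg _)
            rw [div_le_one hq']; exact hjq
        _ = ε := by rw [one_mul]
    · have e : α * j + c = (((j * p' : ℕ):ℝ)/q + c) + (α * j - ((j * p' : ℕ):ℝ)/q) := by ring
      rw [e, fract_shift]
  -- LOWER BOUND
  have hlow : (q:ℝ) * x - 4 ≤ (cnt α c x q : ℝ) := by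
    rcases le_or_gt x (2*ε) with hx2 | hx2
    · have hmul : (q:ℝ)*x ≤ (q:ℝ)*(2*ε) := mul_le_mul_of_nonneg_left hx2 (le_of_lt hq')
      have hqx : (q:ℝ)*x ≤ 2 := by linarith
      have : (0:ℝ) ≤ (cnt α c x q : ℝ) := Nat.cast_nonneg _
      linarith
    · -- x > 2ε
      set Slo := (Finset.Icc 1 q).filter (fun j : ℕ => ε ≤ f j ∧ f j < x - ε) with hSlo
      have hsub : Slo ⊆ Sq := by
        intro j hjm
        simp only [hSlo, Finset.mem_filter] at hjm
        have hjIcc := hjm.1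
        have ha := hjm.2.1
        have hb := hjm.2.2
        obtain ⟨η, hηb, heq⟩ := hkey j hjIcc
        simp only [hSq, Finset.mem_filter]
        refine ⟨hjIcc, ?_⟩
        rw [heq]
        have hab := abs_le.mp hηb
        have hin : 0 ≤ f j + η ∧ f j + η < 1 := ⟨by linarith, by linarith⟩
        rw [Int.fract_eq_self.mpr hin]
        linarith
      have hcardlo : Slo.card = (((Finset.range q).filter
          (fun i : ℕ => ε ≤ g i ∧ g i < x - ε)).card) := by
        rw [hSlo]
        exact reindex p' q hq hcop' c (fun v => ε ≤ v ∧ v < x - ε)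
      -- grid count below
      have hsplit : ((Finset.range q).filter (fun i : ℕ => g i < x - ε))
          = ((Finset.range q).filter (fun i : ℕ => ε ≤ g i ∧ g i < x - ε))
            ∪ ((Finset.range q).filter (fun i : ℕ => g i < ε)) := by
        ext i
        simp only [Finset.mem_filter, Finset.mem_union, Finset.mem_range]
        constructor
        · rintro ⟨hi, hlt⟩
          rcases le_or_gt ε (g i) with h | h
          · exact Or.inl ⟨hi, h, hlt⟩
          · exact Or.inr ⟨hi, h⟩
        · rintro (⟨hi, _, hlt⟩ | ⟨hi, h⟩)
          · exact ⟨hi, hlt⟩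
          · exact ⟨hi, by linarith⟩
      have hdisj : Disjoint ((Finset.range q).filter (fun i : ℕ => ε ≤ g i ∧ g i < x - ε))
          ((Finset.range q).filter (fun i : ℕ => g i < ε)) := by
        rw [Finset.disjoint_left]
        intro i h1' h2'
        simp only [Finset.mem_filter] at h1' h2'
        linarith [h1'.2.1, h2'.2]
      have hWxe := W_close q hq c (x - ε) (by linarith) (by linarith)
      have hWe := W_close q hq c ε hε0 hε1
      have hcards : (((Finset.range q).filter (fun i : ℕ => g i < x - ε)).card : ℝ)
          = (((Finset.range q).filter (fun i : ℕ => ε ≤ g i ∧ g i < x - ε)).card : ℝ)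
            + (((Finset.range q).filter (fun i : ℕ => g i < ε)).card : ℝ) := by
        rw [hsplit]
        exact_mod_cast congrArg (fun n : ℕ => (n:ℝ)) (Finset.card_union_of_disjoint hdisj)
      have habs1 := abs_le.mp hWxe
      have habs2 := abs_le.mp hWe
      have hc1 : (q:ℝ)*x - 4 ≤ (Slo.card : ℝ) := by
        rw [hcardlo]
        push_cast
        linarith
      have : (Slo.card : ℝ) ≤ (cnt α c x q : ℝ) := by
        rw [hcnt]
        exact_mod_cast Finset.card_le_card hsub
      linarith
  -- UPPER BOUND
  have hup : (cnt α c x q : ℝ) ≤ (q:ℝ) * x + 4 := by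
    set t2 := min (x + ε) 1 with ht2
    set Shi := (Finset.Icc 1 q).filter (fun j : ℕ => f j < t2 ∨ 1 - ε ≤ f j) with hShi
    have hsub : Sq ⊆ Shi := by
      intro j hjm
      simp only [hSq, Finset.mem_filter] at hjm
      obtain ⟨hjIcc, hxlt⟩ := hjm
      obtain ⟨η, hηb, heq⟩ := hkey j hjIcc
      have hab := abs_le.mp hηb
      simp only [hShi, Finset.mem_filter]
      refine ⟨hjIcc, ?_⟩
      by_contra hcon
      push_neg at hcon
      obtain ⟨h1', h2'⟩ := hcon
      -- h1' : t2 ≤ f j ; h2' : f j < 1 - ε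
      have hxε : x + ε ≤ f j := by
        rcases le_total (x + ε) 1 with hle | hle
        · rw [ht2] at h1'; rw [min_eq_left hle] at h1'; exact h1'
        · rw [ht2] at h1'; rw [min_eq_right hle] at h1'
          linarith [hf1 j]
      have hin : 0 ≤ f j + η ∧ f j + η < 1 := ⟨by linarith, by linarith⟩
      rw [heq, Int.fract_eq_self.mpr hin] at hxlt
      linarith
    have hcardhi : Shi.card = (((Finset.range q).filter
        (fun i : ℕ => g i < t2 ∨ 1 - ε ≤ g i)).card) := by
      rw [hShi]
      exact reindex p' q hq hcop' c (fun v => v < t2 ∨ 1 - ε ≤ v)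
    have hsplit : ((Finset.range q).filter (fun i : ℕ => g i < t2 ∨ 1 - ε ≤ g i))
        = ((Finset.range q).filter (fun i : ℕ => g i < t2))
          ∪ ((Finset.range q).filter (fun i : ℕ => 1 - ε ≤ g i)) := by
      ext i
      simp only [Finset.mem_filter, Finset.mem_union]
      tauto
    have hcard2 : Shi.card ≤ (((Finset.range q).filter (fun i : ℕ => g i < t2)).card)
        + (((Finset.range q).filter (fun i : ℕ => 1 - ε ≤ g i)).card) := by
      rw [hcardhi, hsplit]
      exact Finset.card_union_le _ _
    have hW2 := W_close q hq c t2 (by rw [ht2]; positivity) (min_le_right _ _)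
    have hW3 := W_close q hq c (1 - ε) (by linarith) (by linarith)
    have hcompl : (((Finset.range q).filter (fun i : ℕ => 1 - ε ≤ g i)).card : ℝ)
        = (q : ℝ) - (((Finset.range q).filter (fun i : ℕ => g i < 1 - ε)).card : ℝ) := by
      have h := Finset.card_filter_add_card_filter_not
        (s := Finset.range q) (p := fun i : ℕ => g i < 1 - ε)
      have heq2 : ((Finset.range q).filter (fun i : ℕ => ¬ (g i < 1 - ε)))
          = ((Finset.range q).filter (fun i : ℕ => 1 - ε ≤ g i)) := by
        apply Finset.filter_congr
        intro i _
        simp [not_lt]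
      rw [heq2] at h
      have hcr : (Finset.range q).card = q := Finset.card_range q
      have := congrArg (fun n : ℕ => (n:ℝ)) h
      push_cast at this ⊢
      rw [hcr] at this
      push_cast at this
      linarith
    have habs2 := abs_le.mp hW2
    have habs3 := abs_le.mp hW3
    have ht2le : t2 ≤ x + ε := min_le_left _ _
    have hfin : (Sq.card : ℝ) ≤ (q:ℝ)*x + 4 := by
      have hc := Finset.card_le_card hsub
      have hc' : (Sq.card : ℝ) ≤ (Shi.card : ℝ) := by exact_mod_cast hc
      have hc2' : (Shi.card : ℝ) ≤ (((Finset.range q).filter (fun i : ℕ => g i < t2)).card : ℝ)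
          + (((Finset.range q).filter (fun i : ℕ => 1 - ε ≤ g i)).card : ℝ) := by
        exact_mod_cast hcard2
      rw [hcompl] at hc2'
      have hmul : (q:ℝ)*t2 ≤ (q:ℝ)*(x+ε) := mul_le_mul_of_nonneg_left ht2le (le_of_lt hq')
      linarith
    rw [hcnt]
    exact hfin
  rw [abs_le]
  exact ⟨by linarith, by linarith⟩

lemma decomp (α c x : ℝ) (q N : ℕ) (hq : 0 < q) (hqN : q ≤ N) :
    cnt α c x N = cnt α c x q + cnt α (c + q * α) x (N - q) := by
  classical
  unfold cnt
  rw [show Finset.Icc 1 N = Finset.Icc 1 q ∪ Finset.Icc (q+1) N by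
    ext k; simp only [Finset.mem_Icc, Finset.mem_union]; omega]
  rw [Finset.filter_union, Finset.card_union_of_disjoint (by
    rw [Finset.disjoint_left]
    intro k h1 h2
    simp only [Finset.mem_filter, Finset.mem_Icc] at h1 h2
    omega)]
  congr 1
  rw [eq_comm]
  apply Finset.card_nbij (i := fun k => k + q)
  · intro k hk
    simp only [Finset.mem_coe, Finset.mem_filter, Finset.mem_Icc] at hk ⊢
    refine ⟨by omega, ?_⟩
    have e : α * ((k + q : ℕ) : ℝ) + c = α * (k:ℝ) + (c + (q:ℝ) * α) := by
      push_cast; ring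
    rw [e]
    exact hk.2
  · intro a _ b _ h
    dsimp only at h
    omega
  · intro k hk
    simp only [Finset.coe_filter, Set.mem_setOf_eq, Finset.mem_Icc] at hk
    refine ⟨k - q, ?_, by dsimp only; omega⟩
    simp only [Finset.mem_coe, Finset.mem_filter, Finset.mem_Icc]
    refine ⟨by omega, ?_⟩
    have e : α * (((k - q) + q : ℕ) : ℝ) + c = α * ((k - q : ℕ):ℝ) + (c + (q:ℝ) * α) := by
      push_cast; ring
    have e2 : ((k - q : ℕ) + q) = k := by omega
    rw [e2] at e
    rw [← e]
    exact hk.2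

set_option maxHeartbeats 1000000 in
lemma disc (α τ δ : ℝ) (hα : 0 < α) (hτ : 0 < τ) (hδ : 0 < δ) (ht : IsTypicalWith α τ δ) :
    ∃ C > (0:ℝ), ∀ N : ℕ, ∀ c x : ℝ, 0 ≤ x → x ≤ 1 →
      |(cnt α c x N : ℝ) - N * x| ≤ C * (1 + Real.log (1 + N) ^ (1 + τ)) := by
  have h2τ : (0:ℝ) < (2:ℝ)^τ := Real.rpow_pos_of_pos (by norm_num) τ
  set C := max 8 (4 * (2:ℝ)^τ / δ) with hC
  have hC8 : (8:ℝ) ≤ C := le_max_left _ _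
  have hCδ : 4 * (2:ℝ)^τ / δ ≤ C := le_max_right _ _
  have hC0 : (0:ℝ) < C := lt_of_lt_of_le (by norm_num) hC8
  refine ⟨C, hC0, ?_⟩
  intro N
  induction N using Nat.strong_induction_on with
  | _ N ih =>
  intro c x hx0 hx1
  have hlogN0 : (0:ℝ) ≤ Real.log (1 + N) := Real.log_nonneg (by
    have : (0:ℝ) ≤ (N:ℝ) := Nat.cast_nonneg _
    linarith)
  have hrpownn : (0:ℝ) ≤ Real.log (1 + (N:ℝ)) ^ (1+τ) := Real.rpow_nonneg hlogN0 _
  have hcrude : ∀ (M : ℕ) (c' : ℝ), |(cnt α c' x M : ℝ) - M * x| ≤ M := by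
    intro M c'
    have h1 : cnt α c' x M ≤ M := by
      have := Finset.card_filter_le (Finset.Icc 1 M)
        (fun k : ℕ => Int.fract (α * k + c') < x)
      simpa [cnt, Nat.card_Icc] using this
    have hM0 : (0:ℝ) ≤ (M:ℝ) := Nat.cast_nonneg _
    have h3 : (M:ℝ) * x ≤ M := by nlinarith
    have h4 : (0:ℝ) ≤ (M:ℝ) * x := by positivity
    have h5 : (cnt α c' x M : ℝ) ≤ M := by exact_mod_cast h1
    have h6 : (0:ℝ) ≤ (cnt α c' x M : ℝ) := Nat.cast_nonneg _
    rw [abs_le]; constructor <;> linarith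
  rcases le_or_gt N 1 with hN1 | hN2
  · -- base case N ≤ 1
    have hb := hcrude N c
    have hNle : (N:ℝ) ≤ 1 := by exact_mod_cast hN1
    calc |(cnt α c x N : ℝ) - N * x| ≤ N := hb
      _ ≤ 1 := hNle
      _ ≤ C * 1 := by linarith
      _ ≤ C * (1 + Real.log (1 + N) ^ (1+τ)) := by nlinarith
  · -- inductive step, N ≥ 2
    have hN0 : 0 < N := by omega
    have hN' : (0:ℝ) < (N:ℝ) := by exact_mod_cast hN0
    have hN2' : (2:ℝ) ≤ (N:ℝ) := by exact_mod_cast hN2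
    obtain ⟨pq, hap, hden⟩ := Real.exists_rat_abs_sub_le_and_den_le α hN0
    set q := pq.den with hqdef
    set p := pq.num with hpdef
    have hq0 : 0 < q := pq.pos
    have hq0' : (0:ℝ) < (q:ℝ) := by exact_mod_cast hq0
    have hqN : q ≤ N := hden
    have hqN' : (q:ℝ) ≤ (N:ℝ) := by exact_mod_cast hqN
    have hcast : ((pq : ℚ) : ℝ) = (p:ℝ)/(q:ℝ) := by
      rw [Rat.cast_def]
    have hap' : |α - (p:ℝ)/(q:ℝ)| ≤ 1 / (((N:ℝ)+1) * q) := by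
      rw [← hcast]
      exact_mod_cast hap
    have hθ : |(q:ℝ) * α - p| ≤ 1/((N:ℝ)+1) := by
      have e : |(q:ℝ) * α - p| = q * |α - (p:ℝ)/q| := by
        rw [← abs_of_pos hq0', ← abs_mul]
        congr 1
        field_simp
        rw [abs_of_pos hq0']; ring
      rw [e]
      calc (q:ℝ) * |α - (p:ℝ)/q| ≤ q * (1/(((N:ℝ)+1)*q)) :=
            mul_le_mul_of_nonneg_left hap' hq0'.le
        _ = 1/((N:ℝ)+1) := by
            field_simp
    have hp0 : (0:ℤ) ≤ p := by
      by_contra hneg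
      push_neg at hneg
      have hple' : p ≤ -1 := by omega
      have hple : (p:ℝ) ≤ -1 := by exact_mod_cast hple'
      have habs := (abs_le.mp hθ).2
      have hge : (q:ℝ)*α - p ≥ 1 := by nlinarith
      have hlt : 1/((N:ℝ)+1) < 1 := by
        rw [div_lt_one] <;> linarith
      linarith
    -- typicality lower bound
    have htyp := ht (-p) (q:ℤ) (by exact_mod_cast hq0.ne')
    have habsq : |((q:ℤ):ℝ)| = (q:ℝ) := by
      have : (((q:ℤ)):ℝ) = (q:ℝ) := by push_cast; ring
      rw [this]
      exact abs_of_pos hq0'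
    have htyp' : δ / ((q:ℝ) * Real.log (1 + (q:ℝ)) ^ τ) ≤ |(q:ℝ)*α - p| := by
      have e2 : |((-p : ℤ):ℝ) + α * ((q:ℤ):ℝ)| = |(q:ℝ)*α - p| := by
        push_cast
        congr 1
        ring
      rw [habsq, e2] at htyp
      exact htyp
    set a := Real.log (1 + (N:ℝ)) with hadef
    have hLq0 : (0:ℝ) < Real.log (1 + (q:ℝ)) := by
      apply Real.log_pos
      have : (1:ℝ) ≤ (q:ℝ) := by exact_mod_cast hq0
      linarith
    have hLqa : Real.log (1 + (q:ℝ)) ≤ a := by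
      apply Real.log_le_log (by linarith)
      linarith
    have ha1 : (1:ℝ) ≤ a := by
      have hexp : Real.exp 1 ≤ 1 + (N:ℝ) := by
        have := Real.exp_one_lt_d9
        linarith
      calc (1:ℝ) = Real.log (Real.exp 1) := (Real.log_exp 1).symm
        _ ≤ a := Real.log_le_log (Real.exp_pos 1) hexp
    have ha0 : (0:ℝ) < a := by linarith
    have haτ : (0:ℝ) < a ^ τ := Real.rpow_pos_of_pos ha0 τ
    have hqbig : δ * ((N:ℝ)+1) ≤ (q:ℝ) * a ^ τ := by
      have hLqτ : Real.log (1 + (q:ℝ)) ^ τ ≤ a ^ τ :=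
        Real.rpow_le_rpow hLq0.le hLqa hτ.le
      have hden0 : (0:ℝ) < (q:ℝ) * Real.log (1 + (q:ℝ)) ^ τ := by positivity
      have hchain : δ / ((q:ℝ) * Real.log (1 + (q:ℝ)) ^ τ) ≤ 1/((N:ℝ)+1) :=
        le_trans htyp' hθ
      rw [div_le_div_iff₀ hden0 (by linarith)] at hchain
      have hchain' : δ * ((N:ℝ)+1) ≤ (q:ℝ) * Real.log (1 + (q:ℝ)) ^ τ := by linarith
      calc δ * ((N:ℝ)+1) ≤ (q:ℝ) * Real.log (1 + (q:ℝ)) ^ τ := hchain'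
        _ ≤ (q:ℝ) * a ^ τ := mul_le_mul_of_nonneg_left hLqτ hq0'.le
    -- block bound hypothesis
    have hbb : (q:ℝ) * |(q:ℝ)*α - p| ≤ 1 := by
      calc (q:ℝ) * |(q:ℝ)*α - p| ≤ (q:ℝ) * (1/((N:ℝ)+1)) :=
            mul_le_mul_of_nonneg_left hθ hq0'.le
        _ ≤ 1 := by
            rw [mul_one_div, div_le_one (by linarith)]
            linarith
    have hblk := blk α hq0 hp0 pq.reduced hbb c x hx0 hx1
    have hdec := decomp α c x q N hq0 hqN
    have hih := ih (N - q) (by omega) (c + (q:ℝ)*α) x hx0 hx1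
    set b := Real.log (1 + ((N - q : ℕ):ℝ)) with hbdef
    have hNq : ((N - q : ℕ):ℝ) = (N:ℝ) - (q:ℝ) := by
      push_cast [Nat.cast_sub hqN]
      ring
    have hb0 : (0:ℝ) ≤ b := Real.log_nonneg (by
      have : (0:ℝ) ≤ ((N - q : ℕ):ℝ) := Nat.cast_nonneg _
      linarith)
    have hba : b ≤ a := by
      apply Real.log_le_log (by linarith)
      have : ((N - q : ℕ):ℝ) ≤ (N:ℝ) := by rw [hNq]; linarith
      linarith
    -- key inequality
    have hkey : 4 ≤ C * (a ^ (1+τ) - b ^ (1+τ)) := by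
      rcases le_or_gt b (a/2) with hcase | hcase
      · have h1' : b ^ (1+τ) ≤ (a/2) ^ (1+τ) :=
          Real.rpow_le_rpow hb0 hcase (by linarith)
        have h2' : (a/2) ^ (1+τ) = a ^ (1+τ) / 2 ^ (1+τ) :=
          Real.div_rpow ha0.le (by norm_num : (0:ℝ) ≤ 2) (1+τ)
        have h3' : (2:ℝ) ≤ 2 ^ (1+τ) := by
          calc (2:ℝ) = 2 ^ (1:ℝ) := (Real.rpow_one 2).symm
            _ ≤ 2 ^ (1+τ) := Real.rpow_le_rpow_of_exponent_le (by norm_num) (by linarith)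
        have h4' : a ^ (1+τ) / 2 ^ (1+τ) ≤ a ^ (1+τ) / 2 := by
          apply div_le_div_of_nonneg_left (Real.rpow_nonneg ha0.le _) (by norm_num) h3'
        have h5' : (1:ℝ) ≤ a ^ (1+τ) := by
          calc (1:ℝ) ≤ a := ha1
            _ = a ^ (1:ℝ) := (Real.rpow_one a).symm
            _ ≤ a ^ (1+τ) := Real.rpow_le_rpow_of_exponent_le ha1 (by linarith)
        have hd2 : 1/2 ≤ a ^ (1+τ) - b ^ (1+τ) := by linarith
        have hmm := mul_le_mul hC8 hd2 (by norm_num) (by linarith : (0:ℝ) ≤ C)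
        linarith
      · -- b > a/2
        have hbpos : (0:ℝ) < b := by linarith
        have haa : a ^ (1+τ) = a * a ^ τ := by
          rw [Real.rpow_add ha0, Real.rpow_one]
        have hbb' : b ^ (1+τ) = b * b ^ τ := by
          rw [Real.rpow_add hbpos, Real.rpow_one]
        have hbτa : b ^ τ ≤ a ^ τ := Real.rpow_le_rpow hb0 hba hτ.le
        have hdiff : (a - b) * b ^ τ ≤ a ^ (1+τ) - b ^ (1+τ) := by
          rw [haa, hbb']
          have h1' : a * b ^ τ ≤ a * a ^ τ := mul_le_mul_of_nonneg_left hbτa ha0.le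
          have e : (a - b) * b ^ τ = a * b ^ τ - b * b ^ τ := by ring
          rw [e]
          linarith
        have hab : δ / a ^ τ ≤ a - b := by
          have hv0 : (0:ℝ) < 1 + (N:ℝ) := by linarith
          have hu0 : (0:ℝ) < 1 + ((N - q : ℕ):ℝ) := by
            have : (0:ℝ) ≤ ((N - q : ℕ):ℝ) := Nat.cast_nonneg _
            linarith
          have hlog := Real.log_le_sub_one_of_pos
            (show (0:ℝ) < (1 + ((N - q : ℕ):ℝ)) / (1 + (N:ℝ)) by positivity)
          rw [Real.log_div hu0.ne' hv0.ne'] at hlog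
          have hfrac : (1 + ((N - q : ℕ):ℝ)) / (1 + (N:ℝ)) - 1 = - ((q:ℝ)/(1+(N:ℝ))) := by
            rw [hNq]
            field_simp
            ring
          rw [hfrac] at hlog
          -- hlog : b - a ≤ -(q/(1+N))
          have hq1N : δ / a ^ τ ≤ (q:ℝ)/(1+(N:ℝ)) := by
            rw [div_le_div_iff₀ haτ (by linarith)]
            calc δ * (1 + (N:ℝ)) = δ * ((N:ℝ)+1) := by ring
              _ ≤ (q:ℝ) * a ^ τ := hqbig
          have hba' : b - a ≤ -((q:ℝ)/(1+(N:ℝ))) := hlog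
          linarith
        have hbτ2 : a ^ τ / 2 ^ τ ≤ b ^ τ := by
          have : (a/2) ^ τ ≤ b ^ τ := Real.rpow_le_rpow (by linarith) hcase.le hτ.le
          rwa [Real.div_rpow ha0.le (by norm_num : (0:ℝ) ≤ 2) τ] at this
        have hprod : δ / 2 ^ τ ≤ (a - b) * b ^ τ := by
          have h1' : (0:ℝ) ≤ δ / a ^ τ := by positivity
          have h2' : (0:ℝ) ≤ a ^ τ / 2 ^ τ := by positivity
          calc δ / 2 ^ τ = (δ / a ^ τ) * (a ^ τ / 2 ^ τ) := by
                field_simp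
            _ ≤ (a - b) * b ^ τ := mul_le_mul hab hbτ2 h2' (by linarith)
        have hfin : δ / 2 ^ τ * C ≥ 4 := by
          calc δ / 2 ^ τ * C ≥ δ / 2 ^ τ * (4 * 2 ^ τ / δ) := by
                apply mul_le_mul_of_nonneg_left hCδ (by positivity)
            _ = 4 := by
                field_simp
        have hstep : C * (δ / 2 ^ τ) ≤ C * (a ^ (1+τ) - b ^ (1+τ)) :=
          mul_le_mul_of_nonneg_left (le_trans hprod hdiff) (by linarith)
        calc (4:ℝ) ≤ δ / 2 ^ τ * C := hfin
          _ = C * (δ / 2 ^ τ) := by ring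
          _ ≤ C * (a ^ (1+τ) - b ^ (1+τ)) := hstep
    -- assemble
    have hsum : (cnt α c x N : ℝ) = (cnt α c x q : ℝ) + (cnt α (c + (q:ℝ)*α) x (N - q) : ℝ) := by
      exact_mod_cast hdec
    rw [hNq] at hih
    have hsplitx : (N:ℝ) * x = (q:ℝ) * x + ((N:ℝ) - (q:ℝ)) * x := by ring
    calc |(cnt α c x N : ℝ) - N * x|
        = |((cnt α c x q : ℝ) - q * x) + ((cnt α (c + (q:ℝ)*α) x (N - q) : ℝ)
            - ((N:ℝ) - (q:ℝ)) * x)| := by rw [hsum, hsplitx]; ring_nf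
      _ ≤ |(cnt α c x q : ℝ) - q * x| + |(cnt α (c + (q:ℝ)*α) x (N - q) : ℝ)
            - ((N:ℝ) - (q:ℝ)) * x| := abs_add_le _ _
      _ ≤ 4 + C * (1 + b ^ (1+τ)) := add_le_add hblk hih
      _ ≤ C * (1 + a ^ (1+τ)) := by
          have hring : C * (1 + a ^ (1+τ)) - C * (1 + b ^ (1+τ))
              = C * (a ^ (1+τ) - b ^ (1+τ)) := by ring
          linarith

lemma cnt_cast (α c x : ℝ) (N : ℕ) :
    (cnt α c x N : ℝ)
      = ∑ k ∈ Finset.Icc 1 N, (if Int.fract (α * k + c) < x then (1:ℝ) else 0) := by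
  classical
  unfold cnt
  rw [Finset.sum_boole]

lemma Kfun_eq (α r β : ℝ) (hr : 1 ≤ r) :
    Kfun α r β = (⌊r⌋ : ℝ) + 2 * ∑ k ∈ Finset.Icc 1 ⌊r⌋.toNat, (⌊α * (k:ℝ)⌋ : ℝ)
      + ((⌊r⌋.toNat : ℝ) - (cnt α 0 (1 - Int.fract β) ⌊r⌋.toNat : ℝ)
         - (cnt α 0 (Int.fract β) ⌊r⌋.toNat : ℝ)) := by
  classical
  have hfl1 : (1:ℤ) ≤ ⌊r⌋ := by
    rw [Int.le_floor]; exact_mod_cast hr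
  set N := ⌊r⌋.toNat with hNdef
  have hNr : ((N:ℕ):ℝ) = (⌊r⌋ : ℝ) := by
    rw [hNdef]
    exact_mod_cast congrArg (fun z : ℤ => (z:ℝ)) (Int.toNat_of_nonneg (by omega))
  have hb0 : 0 ≤ Int.fract β := Int.fract_nonneg β
  have hb1 : Int.fract β < 1 := Int.fract_lt_one β
  unfold Kfun
  split_ifs with h
  · obtain ⟨m, hm⟩ := h
    have hfβ : Int.fract β = 0 := by rw [← hm]; exact Int.fract_intCast m
    rw [hfβ]
    have h1 : cnt α 0 (1 - (0:ℝ)) N = N := by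
      unfold cnt
      rw [Finset.filter_true_of_mem, Nat.card_Icc]
      · omega
      · intro k _
        have := Int.fract_lt_one (α * (k:ℝ) + 0)
        linarith
    have h2 : cnt α 0 (0:ℝ) N = 0 := by
      unfold cnt
      rw [Finset.filter_false_of_mem, Finset.card_empty]
      intro k _
      push_neg
      exact Int.fract_nonneg _
    rw [h1, h2]
    push_cast
    ring
  · set b := Int.fract β with hbdef
    have hfl : b = β - (⌊β⌋:ℝ) := by rw [hbdef, Int.fract]
    have perk : ∀ k ∈ Finset.Icc 1 N,
        ((⌊α * (k:ℝ) + 1 - β⌋ : ℝ) + (⌊α * (k:ℝ) + β⌋ : ℝ))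
          = (2 * (⌊α * (k:ℝ)⌋ : ℝ) + 2)
            - (if Int.fract (α * (k:ℝ) + 0) < 1 - b then (1:ℝ) else 0)
            - (if Int.fract (α * (k:ℝ) + 0) < b then (1:ℝ) else 0) := by
      intro k _
      set y := α * (k:ℝ) with hy
      have e5 : α * (k:ℝ) + 0 = y := by rw [hy, add_zero]
      rw [e5]
      set I1 : ℤ := if Int.fract y < 1 - b then 1 else 0 with hI1
      set I2 : ℤ := if Int.fract y < b then 1 else 0 with hI2
      have e1 : ⌊y + β⌋ = ⌊y + b⌋ + ⌊β⌋ := by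
        rw [show y + β = (y + b) + (⌊β⌋:ℝ) by rw [hfl]; ring]
        exact Int.floor_add_intCast _ _
      have e2 : ⌊y + 1 - β⌋ = ⌊y - b⌋ + (1 - ⌊β⌋) := by
        rw [show y + 1 - β = (y - b) + ((1 - ⌊β⌋ : ℤ):ℝ) by push_cast; rw [hfl]; ring]
        exact Int.floor_add_intCast _ _
      have e3 : ⌊y + b⌋ = ⌊y⌋ + 1 - I1 := by
        have hind := ind_floor (b := 1 - b) (by linarith) (by linarith) y
        rw [← hI1] at hind
        have e' : ⌊y + b⌋ = ⌊y - (1 - b)⌋ + 1 := by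
          rw [show y + b = (y - (1-b)) + ((1:ℤ):ℝ) by push_cast; ring]
          exact Int.floor_add_intCast _ _
        omega
      have e4 : ⌊y - b⌋ = ⌊y⌋ - I2 := by
        have hind := ind_floor (b := b) hb0 (le_of_lt hb1) y
        rw [← hI2] at hind
        omega
      have ezz : ⌊y + 1 - β⌋ + ⌊y + β⌋ = 2 * ⌊y⌋ + 2 - I1 - I2 := by
        rw [e1, e2, e3, e4]; ring
      have := congrArg (fun z : ℤ => (z:ℝ)) ezz
      push_cast at this
      rw [hI1, hI2] at this
      push_cast at this
      convert this using 2
    rw [Finset.sum_congr rfl perk]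
    rw [Finset.sum_sub_distrib, Finset.sum_sub_distrib, Finset.sum_add_distrib,
      Finset.sum_const, Nat.card_Icc, ← Finset.mul_sum]
    rw [← cnt_cast α 0 (1 - b) N, ← cnt_cast α 0 b N]
    have hcard : (N + 1 - 1) = N := by omega
    rw [hcard]
    rw [← hNr]
    push_cast
    ring


end LatticeAux

open LatticeAux in
/-- **Stability of the lattice count in a triangle under vertical shifts.**
If `α > 0` is typical with exponent `τ > 0`, then there are `C_α > 0` and `r₀` such
that `|K(α,r,β₁) - K(α,r,β₂)| < C_α (log r)^{1+τ}` for all `r ≥ r₀` and all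
`β₁, β₂ ∈ ℝ`. -/
theorem lattice_count_shift_stability (α τ : ℝ) (hα : 0 < α) (hτ : 0 < τ)
    (ht : ∃ δ > (0:ℝ), IsTypicalWith α τ δ) :
    ∃ C > (0:ℝ), ∃ r₀ : ℝ, ∀ r : ℝ, r₀ ≤ r → ∀ β₁ β₂ : ℝ,
      |Kfun α r β₁ - Kfun α r β₂| < C * (Real.log r) ^ (1 + τ) := by
  obtain ⟨δ, hδ, htyp⟩ := ht
  obtain ⟨C₁, hC₁, hdisc⟩ := disc α τ δ hα hτ hδ htyp
  have h2τ : (0:ℝ) < (2:ℝ) ^ ((1:ℝ)+τ) := Real.rpow_pos_of_pos (by norm_num) _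
  refine ⟨4*C₁*(1 + (2:ℝ) ^ ((1:ℝ)+τ)) + 1, by positivity, 9, ?_⟩
  intro r hr β₁ β₂
  have hr1 : (1:ℝ) ≤ r := by linarith
  set N := ⌊r⌋.toNat with hN
  set L := Real.log (1 + (N:ℝ)) with hL
  have hL0 : 0 ≤ L := Real.log_nonneg (by
    have : (0:ℝ) ≤ (N:ℝ) := Nat.cast_nonneg _
    linarith)
  have key : ∀ β : ℝ,
      |((cnt α 0 (1 - Int.fract β) N : ℝ) + (cnt α 0 (Int.fract β) N : ℝ)) - (N:ℝ)|
        ≤ 2*C₁*(1 + L ^ (1+τ)) := by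
    intro β
    have hb0 := Int.fract_nonneg β
    have hb1 := Int.fract_lt_one β
    have h1 := hdisc N 0 (1 - Int.fract β) (by linarith) (by linarith)
    have h2 := hdisc N 0 (Int.fract β) hb0 hb1.le
    have e : ((cnt α 0 (1 - Int.fract β) N : ℝ) + (cnt α 0 (Int.fract β) N : ℝ)) - (N:ℝ)
        = ((cnt α 0 (1 - Int.fract β) N : ℝ) - (N:ℝ)*(1 - Int.fract β))
          + ((cnt α 0 (Int.fract β) N : ℝ) - (N:ℝ)*(Int.fract β)) := by ring
    rw [e]
    calc |_ + _| ≤ |(cnt α 0 (1 - Int.fract β) N : ℝ) - (N:ℝ)*(1 - Int.fract β)|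
          + |(cnt α 0 (Int.fract β) N : ℝ) - (N:ℝ)*(Int.fract β)| := abs_add_le _ _
      _ ≤ 2*C₁*(1 + L ^ (1+τ)) := by rw [hL]; linarith
  have hdiff : |Kfun α r β₁ - Kfun α r β₂| ≤ 4*C₁*(1 + L ^ (1+τ)) := by
    rw [Kfun_eq α r β₁ hr1, Kfun_eq α r β₂ hr1]
    have e : ∀ A B₁ B₂ D₁ D₂ E₁ E₂ : ℝ, (A + (E₁ - B₁ - D₁)) - (A + (E₂ - B₂ - D₂))
        = ((B₂ + D₂) - E₂) - ((B₁ + D₁) - E₁) := by intros; ring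
    rw [e]
    calc |_ - _| ≤ |((cnt α 0 (1 - Int.fract β₂) N : ℝ) + (cnt α 0 (Int.fract β₂) N : ℝ))
          - ((⌊r⌋.toNat : ℝ))| + |((cnt α 0 (1 - Int.fract β₁) N : ℝ)
          + (cnt α 0 (Int.fract β₁) N : ℝ)) - ((⌊r⌋.toNat : ℝ))| := abs_sub _ _
      _ ≤ 4*C₁*(1 + L ^ (1+τ)) := by
          have k1 := key β₁
          have k2 := key β₂
          rw [← hN]
          linarith
  -- compare L with log r
  have hflr : ((N:ℕ):ℝ) ≤ r := by
    rw [hN]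
    have h1 : (⌊r⌋.toNat : ℤ) = ⌊r⌋ := Int.toNat_of_nonneg (by
      rw [Int.le_floor]; push_cast; linarith)
    have : ((⌊r⌋.toNat : ℤ) : ℝ) = ((⌊r⌋ : ℤ):ℝ) := by exact_mod_cast h1
    push_cast at this
    rw [this]
    exact Int.floor_le r
  have hr9 : (9:ℝ) ≤ r := hr
  have hrr : 1 + (N:ℝ) ≤ r * r := by nlinarith
  have hlogr1 : (1:ℝ) ≤ Real.log r := by
    have hexp : Real.exp 1 ≤ r := by
      have := Real.exp_one_lt_d9
      linarith
    calc (1:ℝ) = Real.log (Real.exp 1) := (Real.log_exp 1).symm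
      _ ≤ Real.log r := Real.log_le_log (Real.exp_pos 1) hexp
  have hlogr0 : (0:ℝ) < Real.log r := by linarith
  have hL2 : L ≤ 2 * Real.log r := by
    rw [hL]
    calc Real.log (1 + (N:ℝ)) ≤ Real.log (r * r) := by
          apply Real.log_le_log (by positivity) hrr
      _ = Real.log r + Real.log r := Real.log_mul (by linarith) (by linarith)
      _ = 2 * Real.log r := by ring
  have hX1 : (1:ℝ) ≤ (Real.log r) ^ ((1:ℝ)+τ) := by
    calc (1:ℝ) ≤ Real.log r := hlogr1
      _ = (Real.log r) ^ ((1:ℝ)) := (Real.rpow_one _).symm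
      _ ≤ (Real.log r) ^ ((1:ℝ)+τ) := Real.rpow_le_rpow_of_exponent_le hlogr1 (by linarith)
  have hLpow : L ^ ((1:ℝ)+τ) ≤ (2:ℝ) ^ ((1:ℝ)+τ) * (Real.log r) ^ ((1:ℝ)+τ) := by
    calc L ^ ((1:ℝ)+τ) ≤ (2 * Real.log r) ^ ((1:ℝ)+τ) :=
          Real.rpow_le_rpow hL0 hL2 (by linarith)
      _ = (2:ℝ) ^ ((1:ℝ)+τ) * (Real.log r) ^ ((1:ℝ)+τ) :=
          Real.mul_rpow (by norm_num) hlogr0.le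
  set X := (Real.log r) ^ ((1:ℝ)+τ) with hX
  have hfinal : 4*C₁*(1 + L ^ ((1:ℝ)+τ)) ≤ (4*C₁*(1 + (2:ℝ) ^ ((1:ℝ)+τ))) * X := by
    have h1' : 1 + L ^ ((1:ℝ)+τ) ≤ X + (2:ℝ) ^ ((1:ℝ)+τ) * X := by linarith
    have h2' : (0:ℝ) ≤ 4*C₁ := by linarith
    calc 4*C₁*(1 + L ^ ((1:ℝ)+τ)) ≤ 4*C₁*(X + (2:ℝ) ^ ((1:ℝ)+τ) * X) :=
          mul_le_mul_of_nonneg_left h1' h2'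
      _ = (4*C₁*(1 + (2:ℝ) ^ ((1:ℝ)+τ))) * X := by ring
  calc |Kfun α r β₁ - Kfun α r β₂| ≤ 4*C₁*(1 + L ^ ((1:ℝ)+τ)) := hdiff
    _ ≤ (4*C₁*(1 + (2:ℝ) ^ ((1:ℝ)+τ))) * X := hfinal
    _ < (4*C₁*(1 + (2:ℝ) ^ ((1:ℝ)+τ)) + 1) * X := by
        have : (0:ℝ) < X := by linarith
        nlinarith
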